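/- Let $\mu$ be a probability measure on $\mathbb{R}$ with distribution function $F$, let $p\ge 1$, and let $\psi:\mathbb{R}\to[0,\infty)$ be measurable. Then $\int_{\mathbb{R}}\left(\int_{[x,\infty)}\frac{\psi(y)}{F(y)}\,d\mu(y)\right)^p d\mu(x) \le p^p \int_{\mathbb{R}}\psi^p\,d\mu$. -/

import Mathlib

/-!
Write `F y = μ (-∞, y]` and `T x = ∫_{[x,∞)} g dμ`. For a finite measure `ν` on `ℝ` the
tail `y ↦ ν [y, ∞)` is, under `ν`, stochastically larger than the uniform law on
`(0, ν ℝ]`, since `ν {y | ν [y, ∞) < t} ≤ t`; comparing `p`-th moments through the layer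
cake formula gives `ν ℝ ^ p ≤ p ∫ ν [y, ∞) ^ (p - 1) dν`. For `ν = g · μ` on `[x, ∞)` this
reads `T x ^ p ≤ p ∫_{[x,∞)} g T ^ (p - 1) dμ`. Integrating in `x` and exchanging the
integrals bounds `‖T‖_p ^ p` by `p ∫ F g T ^ (p - 1) dμ ≤ p ‖F g‖_p ‖T‖_p ^ (p - 1)`
(Hölder), and dividing by `‖T‖_p ^ (p - 1)`, finite once `g` is truncated, gives
`‖T‖_p ≤ p ‖F g‖_p`. Finally take `g = ψ / F`: in `ℝ≥0∞`, `F (ψ / F) ≤ ψ` even where `F = 0`.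
-/

open MeasureTheory Set ENNReal

theorem antitone_setLIntegral_Ici {α : Type*} [MeasurableSpace α] [Preorder α]
    (μ : Measure α) (g : α → ℝ≥0∞) : Antitone fun x => ∫⁻ y in Ici x, g y ∂μ :=
  fun _ _ hab => lintegral_mono_set (Ici_subset_Ici.2 hab)

section LinearOrder

variable {α : Type*} [LinearOrder α] [TopologicalSpace α] [ClosedIicTopology α]
  [SecondCountableTopology α]

theorem exists_countable_subset_subset_biUnion_Ici (S : Set α) :
    ∃ D ⊆ S, D.Countable ∧ S ⊆ ⋃ d ∈ D, Ici d := by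
  obtain ⟨T, hTS, hTc, hT⟩ :=
    TopologicalSpace.isOpen_biUnion_countable S (fun y => Ioi y) fun y _ => isOpen_Ioi
  -- only a least element of `S` can escape the countable subcover by the open rays
  have hmin : (S \ ⋃ y ∈ S, Ioi y).Subsingleton := by
    intro a ha b hb
    by_contra hab
    rcases lt_or_gt_of_ne hab with h | h
    · exact hb.2 (mem_biUnion ha.1 h)
    · exact ha.2 (mem_biUnion hb.1 h)
  refine ⟨T ∪ (S \ ⋃ y ∈ S, Ioi y), union_subset hTS sdiff_subset, hTc.union hmin.countable, ?_⟩
  intro s hs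
  by_cases h : s ∈ ⋃ y ∈ S, Ioi y
  · rw [← hT] at h
    obtain ⟨d, hd, hsd⟩ := mem_iUnion₂.1 h
    exact mem_biUnion (Or.inl hd) (le_of_lt hsd)
  · exact mem_biUnion (Or.inr ⟨hs, h⟩) le_rfl

variable [MeasurableSpace α]

theorem measure_le_of_forall_measure_Ici_le (μ : Measure α) {S : Set α} {c : ℝ≥0∞}
    (h : ∀ y ∈ S, μ (Ici y) ≤ c) : μ S ≤ c := by
  obtain ⟨D, hDS, hDc, hSD⟩ := exists_countable_subset_subset_biUnion_Ici S
  have hdir : DirectedOn (fun a b : α => Ici a ⊆ Ici b) D := fun a ha b hb => by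
    rcases le_total a b with hab | hab
    · exact ⟨a, ha, subset_rfl, Ici_subset_Ici.2 hab⟩
    · exact ⟨b, hb, Ici_subset_Ici.2 hab, subset_rfl⟩
  calc μ S ≤ μ (⋃ d ∈ D, Ici d) := measure_mono hSD
    _ = ⨆ d ∈ D, μ (Ici d) := measure_biUnion_eq_iSup hDc hdir
    _ ≤ c := iSup₂_le fun d hd => h d (hDS hd)

theorem measure_setOf_measure_Ici_lt_le (μ : Measure α) (t : ℝ≥0∞) :
    μ {y | μ (Ici y) < t} ≤ t :=
  measure_le_of_forall_measure_Ici_le μ fun _ hy => le_of_lt hy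

theorem measure_univ_sub_le_measure_setOf_le_measure_Ici (μ : Measure α) (t : ℝ≥0∞) :
    μ univ - t ≤ μ {y | t ≤ μ (Ici y)} := by
  rw [tsub_le_iff_right]
  calc μ univ ≤ μ {y | t ≤ μ (Ici y)} + μ {y | t ≤ μ (Ici y)}ᶜ := measure_univ_le_add_compl _
    _ ≤ μ {y | t ≤ μ (Ici y)} + t := by
        gcongr
        simpa only [compl_ofPred, not_le] using measure_setOf_measure_Ici_lt_le μ t

end LinearOrder

theorem lintegral_ofReal_rpow_le_of_measure_le {α β : Type*} [MeasurableSpace α]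
    [MeasurableSpace β] {μ : Measure α} {ν : Measure β} {f : α → ℝ} {g : β → ℝ}
    (hf_nn : 0 ≤ᵐ[μ] f) (hf : AEMeasurable f μ) (hg_nn : 0 ≤ᵐ[ν] g) (hg : AEMeasurable g ν)
    {q : ℝ} (hq : 0 < q) (h : ∀ t > 0, μ {x | t ≤ f x} ≤ ν {y | t ≤ g y}) :
    ∫⁻ x, ENNReal.ofReal (f x ^ q) ∂μ ≤ ∫⁻ y, ENNReal.ofReal (g y ^ q) ∂ν := by
  rw [lintegral_rpow_eq_lintegral_meas_le_mul μ hf_nn hf hq,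
    lintegral_rpow_eq_lintegral_meas_le_mul ν hg_nn hg hq]
  exact mul_le_mul_right (setLIntegral_mono' measurableSet_Ioi fun t ht =>
    mul_le_mul_left (h t ht) _) _

theorem setLIntegral_Ioc_zero_ofReal_rpow {m q : ℝ} (hm : 0 ≤ m) (hq : -1 < q) :
    ∫⁻ s in Ioc 0 m, ENNReal.ofReal (s ^ q) = ENNReal.ofReal (m ^ (q + 1) / (q + 1)) := by
  have hint : IntegrableOn (fun s : ℝ => s ^ q) (Ioc 0 m) :=
    (intervalIntegrable_iff_integrableOn_Ioc_of_le hm).1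
      (intervalIntegral.intervalIntegrable_rpow' hq)
  rw [← ofReal_integral_eq_lintegral_ofReal hint
      (ae_restrict_of_forall_mem measurableSet_Ioc fun s hs => Real.rpow_nonneg hs.1.le q),
    ← intervalIntegral.integral_of_le hm, integral_rpow (Or.inl hq),
    Real.zero_rpow (by linarith), sub_zero]

theorem measure_univ_rpow_le_lintegral_measure_Ici_rpow (ν : Measure ℝ)
    [IsFiniteMeasure ν] {p : ℝ} (hp : 1 ≤ p) :
    ν univ ^ p ≤ ENNReal.ofReal p * ∫⁻ y, ν (Ici y) ^ (p - 1) ∂ν := by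
  rcases hp.eq_or_lt with rfl | hp
  · simp
  set m := (ν univ).toReal
  have hm : ENNReal.ofReal m = ν univ := ofReal_toReal (measure_ne_top ν univ)
  have hG : Antitone fun y => (ν (Ici y)).toReal := fun a b hab =>
    toReal_mono (measure_ne_top _ _) (measure_mono (Ici_subset_Ici.2 hab))
  have hdist : ∀ t > 0, volume.restrict (Ioc 0 m) {s | t ≤ s}
      ≤ ν {y | t ≤ (ν (Ici y)).toReal} := by
    intro t ht
    calc volume.restrict (Ioc 0 m) {s | t ≤ s} ≤ volume (Icc t m) := by
          change volume.restrict (Ioc 0 m) (Ici t) ≤ _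
          rw [Measure.restrict_apply measurableSet_Ici]
          exact measure_mono fun s hs => ⟨hs.1, hs.2.2⟩
      _ = ν univ - ENNReal.ofReal t := by rw [Real.volume_Icc, ofReal_sub _ ht.le, hm]
      _ ≤ ν {y | ENNReal.ofReal t ≤ ν (Ici y)} :=
          measure_univ_sub_le_measure_setOf_le_measure_Ici ν _
      _ = ν {y | t ≤ (ν (Ici y)).toReal} := by
          simp only [ofReal_le_iff_le_toReal (measure_ne_top ν _)]
  have hcomp : ∫⁻ s in Ioc 0 m, ENNReal.ofReal (s ^ (p - 1))
      ≤ ∫⁻ y, ENNReal.ofReal ((ν (Ici y)).toReal ^ (p - 1)) ∂ν :=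
    lintegral_ofReal_rpow_le_of_measure_le
    (ae_restrict_of_forall_mem measurableSet_Ioc fun s hs => hs.1.le) aemeasurable_id
    (.of_forall fun _ => toReal_nonneg) hG.measurable.aemeasurable (sub_pos.2 hp) hdist
  rw [setLIntegral_Ioc_zero_ofReal_rpow toReal_nonneg (by linarith), sub_add_cancel] at hcomp
  calc ν univ ^ p = ENNReal.ofReal p * ENNReal.ofReal (m ^ p / p) := by
        rw [← ofReal_mul (by linarith), mul_div_cancel₀ _ (by positivity),
          ← ofReal_rpow_of_nonneg toReal_nonneg (by linarith), hm]
    _ ≤ ENNReal.ofReal p * ∫⁻ y, ENNReal.ofReal ((ν (Ici y)).toReal ^ (p - 1)) ∂ν := by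
        gcongr
    _ = ENNReal.ofReal p * ∫⁻ y, ν (Ici y) ^ (p - 1) ∂ν := by
        congr 1
        refine lintegral_congr fun y => ?_
        rw [← ofReal_rpow_of_nonneg toReal_nonneg (by linarith),
          ofReal_toReal (measure_ne_top _ _)]

section Fubini

variable {α : Type*} [LinearOrder α] [TopologicalSpace α] [OrderClosedTopology α]
  [SecondCountableTopology α] [MeasurableSpace α] [OpensMeasurableSpace α]

theorem lintegral_setLIntegral_Ici (μ : Measure α) [SFinite μ] {h : α → ℝ≥0∞}
    (hh : Measurable h) :
    ∫⁻ x, ∫⁻ y in Ici x, h y ∂μ ∂μ = ∫⁻ y, μ (Iic y) * h y ∂μ := by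
  have hmeas : Measurable fun z : α × α => if z.1 ≤ z.2 then h z.2 else 0 :=
    (hh.comp measurable_snd).ite (measurableSet_le measurable_fst measurable_snd)
      measurable_const
  calc ∫⁻ x, ∫⁻ y in Ici x, h y ∂μ ∂μ
      = ∫⁻ x, ∫⁻ y, (if x ≤ y then h y else 0) ∂μ ∂μ := by
        simp only [← lintegral_indicator measurableSet_Ici, indicator, mem_Ici]
    _ = ∫⁻ y, ∫⁻ x, (if x ≤ y then h y else 0) ∂μ ∂μ :=
        lintegral_lintegral_swap hmeas.aemeasurable
    _ = ∫⁻ y, μ (Iic y) * h y ∂μ := by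
        refine lintegral_congr fun y => ?_
        rw [mul_comm, ← lintegral_indicator_const measurableSet_Iic]
        simp only [indicator, mem_Iic]

end Fubini

theorem measurable_measure_Iic {α : Type*} [MeasurableSpace α] [LinearOrder α]
    [TopologicalSpace α] [OrderClosedTopology α] [BorelSpace α] (μ : Measure α) :
    Measurable fun y => μ (Iic y) :=
  Monotone.measurable fun _ _ hab => measure_mono (Iic_subset_Iic.2 hab)

theorem ENNReal.le_rpow_of_le_mul_rpow {a b : ℝ≥0∞} {p q : ℝ} (hpq : p.HolderConjugate q)
    (ha : a ≠ ∞) (h : a ≤ b * a ^ (1 / q)) : a ≤ b ^ p := by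
  rcases eq_or_ne a 0 with rfl | ha0
  · exact zero_le
  have haq0 : a ^ (1 / q) ≠ 0 := (rpow_pos (pos_iff_ne_zero.2 ha0) ha).ne'
  have haq : a ^ (1 / q) ≠ ∞ := rpow_ne_top_of_nonneg (one_div_nonneg.2 hpq.symm.nonneg) ha
  have hab : a ^ (1 / p) ≤ b := by
    rw [← ENNReal.mul_le_mul_iff_left haq0 haq, ← rpow_add _ _ ha0 ha, one_div, one_div,
      hpq.inv_add_inv_eq_one, rpow_one]
    rwa [one_div] at h
  calc a = (a ^ (1 / p)) ^ p := by rw [← rpow_mul, one_div_mul_cancel hpq.ne_zero, rpow_one]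
    _ ≤ b ^ p := rpow_le_rpow hab hpq.nonneg

theorem setLIntegral_Ici_rpow_le (μ : Measure ℝ) {g : ℝ → ℝ≥0∞} (hg : Measurable g) {p : ℝ}
    (hp : 1 ≤ p) {x : ℝ} (hx : ∫⁻ y in Ici x, g y ∂μ ≠ ∞) :
    (∫⁻ y in Ici x, g y ∂μ) ^ p
      ≤ ENNReal.ofReal p * ∫⁻ y in Ici x, g y * (∫⁻ z in Ici y, g z ∂μ) ^ (p - 1) ∂μ := by
  set ν := (μ.restrict (Ici x)).withDensity g
  have hν_univ : ν univ = ∫⁻ y in Ici x, g y ∂μ := by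
    rw [withDensity_apply _ MeasurableSet.univ, Measure.restrict_univ]
  have : IsFiniteMeasure ν := ⟨hν_univ ▸ hx.lt_top⟩
  have hν_Ici : ∀ y ∈ Ici x, ν (Ici y) = ∫⁻ z in Ici y, g z ∂μ := fun y hy => by
    rw [withDensity_apply _ measurableSet_Ici, Measure.restrict_restrict measurableSet_Ici,
      inter_eq_left.2 (Ici_subset_Ici.2 hy)]
  have hmeas : Measurable fun y => ν (Ici y) ^ (p - 1) := Antitone.measurable fun a b hab =>
    rpow_le_rpow (measure_mono (Ici_subset_Ici.2 hab)) (by linarith)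
  calc (∫⁻ y in Ici x, g y ∂μ) ^ p = ν univ ^ p := by rw [hν_univ]
    _ ≤ ENNReal.ofReal p * ∫⁻ y, ν (Ici y) ^ (p - 1) ∂ν :=
        measure_univ_rpow_le_lintegral_measure_Ici_rpow ν hp
    _ = ENNReal.ofReal p * ∫⁻ y in Ici x, g y * ν (Ici y) ^ (p - 1) ∂μ := by
        rw [lintegral_withDensity_eq_lintegral_mul _ hg hmeas]
        rfl
    _ = ENNReal.ofReal p * ∫⁻ y in Ici x, g y * (∫⁻ z in Ici y, g z ∂μ) ^ (p - 1) ∂μ := by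
        congr 1
        exact setLIntegral_congr_fun measurableSet_Ici fun y hy => by rw [hν_Ici y hy]

theorem lintegral_rpow_setLIntegral_Ici_le_mul (μ : Measure ℝ) [SFinite μ] {p : ℝ}
    (hp : 1 ≤ p) {g : ℝ → ℝ≥0∞} (hg : Measurable g)
    (hT : ∀ x, ∫⁻ y in Ici x, g y ∂μ ≠ ∞) :
    ∫⁻ x, (∫⁻ y in Ici x, g y ∂μ) ^ p ∂μ
      ≤ ENNReal.ofReal p * ∫⁻ y, μ (Iic y) * g y * (∫⁻ z in Ici y, g z ∂μ) ^ (p - 1) ∂μ := by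
  set T := fun x => ∫⁻ y in Ici x, g y ∂μ
  have hTp_meas : Measurable fun y => T y ^ (p - 1) :=
    (antitone_setLIntegral_Ici μ g).measurable.pow_const _
  calc ∫⁻ x, T x ^ p ∂μ ≤ ∫⁻ x, ENNReal.ofReal p * ∫⁻ y in Ici x, g y * T y ^ (p - 1) ∂μ ∂μ :=
        lintegral_mono fun x => setLIntegral_Ici_rpow_le μ hg hp (hT x)
    _ = ENNReal.ofReal p * ∫⁻ x, ∫⁻ y in Ici x, g y * T y ^ (p - 1) ∂μ ∂μ :=
        lintegral_const_mul' _ _ ofReal_ne_top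
    _ = ENNReal.ofReal p * ∫⁻ y, μ (Iic y) * g y * T y ^ (p - 1) ∂μ := by
        rw [lintegral_setLIntegral_Ici μ (h := fun y => g y * T y ^ (p - 1)) (hg.mul hTp_meas)]
        simp only [mul_assoc]

theorem lintegral_rpow_setLIntegral_Ici_le_of_le (μ : Measure ℝ) [IsFiniteMeasure μ] {p : ℝ}
    (hp : 1 ≤ p) {g : ℝ → ℝ≥0∞} (hg : Measurable g) {C : ℝ≥0∞} (hC : C ≠ ∞)
    (hgC : ∀ y, g y ≤ C) :
    ∫⁻ x, (∫⁻ y in Ici x, g y ∂μ) ^ p ∂μ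
      ≤ ENNReal.ofReal (p ^ p) * ∫⁻ y, (μ (Iic y) * g y) ^ p ∂μ := by
  have hp0 : 0 < p := by linarith
  set T := fun x => ∫⁻ y in Ici x, g y ∂μ
  have hCμ : C * μ univ ≠ ∞ := mul_ne_top hC (measure_ne_top μ univ)
  have hT_le : ∀ x, T x ≤ C * μ univ := fun x =>
    calc T x ≤ ∫⁻ _ in Ici x, C ∂μ := lintegral_mono hgC
      _ = C * μ (Ici x) := setLIntegral_const _ _
      _ ≤ C * μ univ := by gcongr; exact subset_univ _
  set I := ∫⁻ x, T x ^ p ∂μ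
  have hI : I ≠ ∞ := by
    refine ne_top_of_le_ne_top ?_ (lintegral_mono fun x => rpow_le_rpow (hT_le x) hp0.le)
    rw [lintegral_const]
    exact mul_ne_top (rpow_ne_top_of_nonneg hp0.le hCμ) (measure_ne_top μ univ)
  have hI_le := lintegral_rpow_setLIntegral_Ici_le_mul μ hp hg
    fun x => ne_top_of_le_ne_top hCμ (hT_le x)
  rcases hp.eq_or_lt with rfl | hp1
  · simpa [I, T] using hI_le
  have hpq := Real.HolderConjugate.conjExponent hp1
  set J := ∫⁻ y, (μ (Iic y) * g y) ^ p ∂μ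
  calc I ≤ (ENNReal.ofReal p * J ^ (1 / p)) ^ p := by
        refine ENNReal.le_rpow_of_le_mul_rpow hpq hI (hI_le.trans ?_)
        rw [mul_assoc]
        gcongr
        exact ENNReal.lintegral_mul_rpow_le_lintegral_rpow_mul_lintegral_rpow hpq
          ((measurable_measure_Iic μ).mul hg).aemeasurable
          (antitone_setLIntegral_Ici μ g).measurable.aemeasurable
    _ = ENNReal.ofReal (p ^ p) * J := by
        rw [mul_rpow_of_nonneg _ _ hp0.le, ← rpow_mul, one_div_mul_cancel hp0.ne', rpow_one,
          ofReal_rpow_of_pos hp0]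

theorem lintegral_rpow_setLIntegral_Ici_le (μ : Measure ℝ) [IsFiniteMeasure μ] {p : ℝ}
    (hp : 1 ≤ p) {g : ℝ → ℝ≥0∞} (hg : Measurable g) :
    ∫⁻ x, (∫⁻ y in Ici x, g y ∂μ) ^ p ∂μ
      ≤ ENNReal.ofReal (p ^ p) * ∫⁻ y, (μ (Iic y) * g y) ^ p ∂μ := by
  have hp0 : 0 < p := by linarith
  set gₙ : ℕ → ℝ → ℝ≥0∞ := fun n y => min (g y) n
  have hgₙ_mono : Monotone gₙ := fun m n hmn y => min_le_min_left _ (Nat.cast_le.2 hmn)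
  have hgₙ_meas : ∀ n, Measurable (gₙ n) := fun n => hg.min measurable_const
  have hgₙ_sup : ∀ y, ⨆ n, gₙ n y = g y := fun y => by
    simp only [gₙ, ← inf_iSup_eq, iSup_natCast, inf_top_eq]
  have hT_sup : ∀ x, (∫⁻ y in Ici x, g y ∂μ) ^ p = ⨆ n, (∫⁻ y in Ici x, gₙ n y ∂μ) ^ p := by
    intro x
    simp_rw [← hgₙ_sup]
    rw [lintegral_iSup hgₙ_meas hgₙ_mono]
    exact (orderIsoRpow p hp0).map_iSup _
  calc ∫⁻ x, (∫⁻ y in Ici x, g y ∂μ) ^ p ∂μ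
      = ∫⁻ x, ⨆ n, (∫⁻ y in Ici x, gₙ n y ∂μ) ^ p ∂μ := lintegral_congr hT_sup
    _ = ⨆ n, ∫⁻ x, (∫⁻ y in Ici x, gₙ n y ∂μ) ^ p ∂μ :=
        lintegral_iSup (fun n => (antitone_setLIntegral_Ici μ _).measurable.pow_const p)
          fun m n hmn x => rpow_le_rpow (lintegral_mono (hgₙ_mono hmn)) hp0.le
    _ ≤ ENNReal.ofReal (p ^ p) * ∫⁻ y, (μ (Iic y) * g y) ^ p ∂μ := iSup_le fun n =>
        (lintegral_rpow_setLIntegral_Ici_le_of_le μ hp (hgₙ_meas n) (natCast_ne_top n)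
          fun y => min_le_right _ _).trans (by gcongr; exact min_le_left _ _)

/-- Probabilistic Copson inequality: with `F y = μ (Iic y)` the distribution
function of the probability measure `μ`, and `p ≥ 1`. -/
theorem probability_copson (μ : Measure ℝ) [IsProbabilityMeasure μ]
    (p : ℝ) (hp : 1 ≤ p) (ψ : ℝ → ℝ≥0∞) (hψ : Measurable ψ) :
    ∫⁻ x, (∫⁻ y in Ici x, ψ y / μ (Iic y) ∂μ) ^ p ∂μ
      ≤ ENNReal.ofReal (p ^ p) * ∫⁻ y, ψ y ^ p ∂μ := by
  calc ∫⁻ x, (∫⁻ y in Ici x, ψ y / μ (Iic y) ∂μ) ^ p ∂μ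
      ≤ ENNReal.ofReal (p ^ p) * ∫⁻ y, (μ (Iic y) * (ψ y / μ (Iic y))) ^ p ∂μ :=
        lintegral_rpow_setLIntegral_Ici_le μ hp (hψ.div (measurable_measure_Iic μ))
    _ ≤ ENNReal.ofReal (p ^ p) * ∫⁻ y, ψ y ^ p ∂μ := by
        gcongr with y
        exact mul_div_le
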